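/- For any compact set W ⊆ ℝ^{n+m}, the set W_∞ = ⋂_{i≥1} I^i(W) is invariant for the plant: every (x,u) ∈ W_∞ satisfies f(x,u) ∈ proj(W_∞). -/

import Mathlib

open Set

/-- The mapping I(W) = { w ∈ W | f(w) ∈ proj(W) }. -/
def Imap {n m : ℕ} (f : (Fin n → ℝ) × (Fin m → ℝ) → (Fin n → ℝ))
    (W : Set ((Fin n → ℝ) × (Fin m → ℝ))) : Set ((Fin n → ℝ) × (Fin m → ℝ)) :=
  {w ∈ W | f w ∈ Prod.fst '' W}

lemma Imap_subset {n m : ℕ} (f : (Fin n → ℝ) × (Fin m → ℝ) → (Fin n → ℝ))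
    (W : Set ((Fin n → ℝ) × (Fin m → ℝ))) : Imap f W ⊆ W := fun _ h => h.1

lemma Imap_mono {n m : ℕ} (f : (Fin n → ℝ) × (Fin m → ℝ) → (Fin n → ℝ))
    {V W : Set ((Fin n → ℝ) × (Fin m → ℝ))} (h : V ⊆ W) : Imap f V ⊆ Imap f W :=
  fun w hw => ⟨h hw.1, image_mono h hw.2⟩

lemma iter_mono {n m : ℕ} (f : (Fin n → ℝ) × (Fin m → ℝ) → (Fin n → ℝ))
    (k : ℕ) {V W : Set ((Fin n → ℝ) × (Fin m → ℝ))} (h : V ⊆ W) :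
    (Imap f)^[k] V ⊆ (Imap f)^[k] W := by
  induction k generalizing V W with
  | zero => exact h
  | succ k ih =>
    rw [Function.iterate_succ_apply, Function.iterate_succ_apply]
    exact ih (Imap_mono f h)

lemma iter_antitone {n m : ℕ} (f : (Fin n → ℝ) × (Fin m → ℝ) → (Fin n → ℝ))
    (W : Set ((Fin n → ℝ) × (Fin m → ℝ))) (k : ℕ) :
    (Imap f)^[k + 1] W ⊆ (Imap f)^[k] W := by
  rw [Function.iterate_succ_apply]
  exact iter_mono f k (Imap_subset f W)

lemma iter_compact {n m : ℕ} (f : (Fin n → ℝ) × (Fin m → ℝ) → (Fin n → ℝ))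
    (hf : Continuous f) (W : Set ((Fin n → ℝ) × (Fin m → ℝ))) (hW : IsCompact W)
    (k : ℕ) : IsCompact ((Imap f)^[k] W) := by
  induction k with
  | zero => exact hW
  | succ k ih =>
    rw [Function.iterate_succ_apply']
    have hcl : IsClosed (f ⁻¹' (Prod.fst '' ((Imap f)^[k] W))) :=
      ((ih.image continuous_fst).isClosed).preimage hf
    have : Imap f ((Imap f)^[k] W) = (Imap f)^[k] W ∩ f ⁻¹' (Prod.fst '' ((Imap f)^[k] W)) := rfl
    rw [this]
    exact ih.inter_right hcl

theorem stmt_2 (n m : ℕ) (f : (Fin n → ℝ) × (Fin m → ℝ) → (Fin n → ℝ))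
    (hf : Continuous f) (W : Set ((Fin n → ℝ) × (Fin m → ℝ))) (hW : IsCompact W) :
    ∀ w ∈ ⋂ i : ℕ, (Imap f)^[i + 1] W,
      f w ∈ Prod.fst '' (⋂ i : ℕ, (Imap f)^[i + 1] W) := by
  intro w hw
  simp only [mem_iInter] at hw
  -- K i = I^{i+1}(W) ∩ fst⁻¹ {f w}
  set K : ℕ → Set ((Fin n → ℝ) × (Fin m → ℝ)) :=
    fun i => (Imap f)^[i + 1] W ∩ Prod.fst ⁻¹' {f w} with hK
  have hKcl : ∀ i, IsClosed (K i) := fun i =>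
    ((iter_compact f hf W hW (i + 1)).isClosed).inter
      (isClosed_singleton.preimage continuous_fst)
  have hKcomp : IsCompact (K 0) :=
    (iter_compact f hf W hW 1).inter_right (isClosed_singleton.preimage continuous_fst)
  have hKsub : ∀ i, K (i + 1) ⊆ K i := fun i =>
    inter_subset_inter_left _ (iter_antitone f W (i + 1))
  have hKne : ∀ i, (K i).Nonempty := by
    intro i
    have h2 := hw (i + 1)
    rw [Function.iterate_succ_apply'] at h2
    obtain ⟨v, hv, hveq⟩ := h2.2
    exact ⟨v, hv, hveq⟩
  obtain ⟨v, hv⟩ := IsCompact.nonempty_iInter_of_sequence_nonempty_isCompact_isClosed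
    K hKsub hKne hKcomp hKcl
  simp only [mem_iInter, hK, mem_inter_iff, mem_preimage, mem_singleton_iff] at hv
  exact ⟨v, mem_iInter.2 fun i => (hv i).1, (hv 0).2⟩
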